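/- arXiv:2410.22856 — 2 statements merged into one kernel-verified Lean document; each statement's English description precedes it below -/
import Mathlib

section
/- Let n ≥ 2, γ ≥ 1, 0 ≤ l < k < n. For λ ∈ ℝⁿ define η_i = γ·(∑_{j=1}^n λ_j) − λ_i for 1 ≤ i ≤ n. If λ₁ ≥ λ₂ ≥ ⋯ ≥ λₙ and η lies in the Gårding cone Γ_k, then the partial derivatives of the map λ ↦ σ_k(η)/σ_l(η) are monotone: ∂[σ_k(η)/σ_l(η)]/∂λ₁ ≤ ∂[σ_k(η)/σ_l(η)]/∂λ₂ ≤ ⋯ ≤ ∂[σ_k(η)/σ_l(η)]/∂λₙ. -/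
open Finset Polynomial

variable {n : ℕ}

/-- The k-th elementary symmetric polynomial of a vector in ℝⁿ. -/
noncomputable def esymmR (n k : ℕ) (lam : Fin n → ℝ) : ℝ :=
  ∑ s ∈ Finset.univ.powersetCard k, ∏ i ∈ s, lam i

/-- The Gårding cone Γ_k. -/
def GardingCone (n k : ℕ) : Set (Fin n → ℝ) :=
  {lam | ∀ i : ℕ, 1 ≤ i → i ≤ k → 0 < esymmR n i lam}

/-- The transformed vector η(λ), with η_i = γ·(∑_j λ_j) − λ_i. -/
noncomputable def etaV (n : ℕ) (γ : ℝ) (lam : Fin n → ℝ) : Fin n → ℝ :=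
  fun i => γ * (∑ j, lam j) - lam i


noncomputable def esum (x : Fin n → ℝ) (r : ℕ) (A : Finset (Fin n)) : ℝ :=
  ∑ s ∈ A.powersetCard r, ∏ i ∈ s, x i

lemma esum_zero (x : Fin n → ℝ) (A : Finset (Fin n)) : esum x 0 A = 1 := by
  simp [esum]

lemma esum_insert (x : Fin n → ℝ) {a : Fin n} {A : Finset (Fin n)} (ha : a ∉ A) (r : ℕ) :
    esum x (r+1) (insert a A) = x a * esum x r A + esum x (r+1) A := by
  classical
  rw [esum, Finset.powersetCard_succ_insert ha, Finset.sum_union, Finset.sum_image]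
  · rw [add_comm, esum, esum, Finset.mul_sum]
    congr 1
    refine Finset.sum_congr rfl fun s hs => ?_
    rw [Finset.mem_powersetCard] at hs
    rw [Finset.prod_insert (fun hc => ha (hs.1 hc))]
  · intro s hs t ht hst
    rw [Finset.mem_coe, Finset.mem_powersetCard] at hs ht
    have h1 : s = (insert a s).erase a := (Finset.erase_insert (fun hc => ha (hs.1 hc))).symm
    have h2 : t = (insert a t).erase a := (Finset.erase_insert (fun hc => ha (ht.1 hc))).symm
    rw [h1, h2, hst]
  · rw [Finset.disjoint_right]
    rintro s hs hs'
    rw [Finset.mem_image] at hs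
    obtain ⟨t, ht, rfl⟩ := hs
    rw [Finset.mem_powersetCard] at hs' ht
    exact ha (hs'.1 (Finset.mem_insert_self a t))

lemma esum_erase (x : Fin n → ℝ) {a : Fin n} {A : Finset (Fin n)} (ha : a ∈ A) (r : ℕ) :
    esum x (r+1) A = x a * esum x r (A.erase a) + esum x (r+1) (A.erase a) := by
  conv_lhs => rw [← Finset.insert_erase ha]
  exact esum_insert x (Finset.notMem_erase a A) r

lemma coeff_prodXC (x : Fin n → ℝ) (A : Finset (Fin n)) {j : ℕ} (h : j ≤ A.card) :
    (∏ i ∈ A, (X + C (x i))).coeff j = esum x (A.card - j) A :=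
  Finset.prod_X_add_C_coeff A x h

lemma splits_derivative (p : ℝ[X]) (hp : p.Splits) :
    (derivative p).Splits := by
  by_cases hd0 : derivative p = 0
  · rw [hd0]; exact Splits.zero
  by_cases hp0 : p = 0
  · rw [hp0] at hd0; simp at hd0
  have hroots : p.roots.card = p.natDegree := (splits_iff_card_roots).1 hp
  have h1 : p.natDegree ≤ (derivative p).roots.card + 1 := by
    rw [← hroots]; exact p.card_roots_le_derivative
  have h2 : (derivative p).roots.card ≤ (derivative p).natDegree :=
    (derivative p).card_roots' 
  have h3 : (derivative p).natDegree ≤ p.natDegree - 1 := p.natDegree_derivative_le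
  rw [splits_iff_card_roots]
  omega

lemma splits_iterate_derivative (p : ℝ[X]) (hp : p.Splits) (k : ℕ) :
    (derivative^[k] p).Splits := by
  induction k with
  | zero => exact hp
  | succ k ih => rw [Function.iterate_succ_apply']; exact splits_derivative _ ih

lemma splits_reverse (p : ℝ[X]) (hp : p.Splits) :
    p.reverse.Splits := by
  by_cases hp0 : p = 0
  · rw [hp0]; simpa using Splits.zero
  have key : ∀ (s : Multiset ℝ) (c : ℝ),
      (C c * (s.map fun a => X - C a).prod).reverse.Splits := by
    intro s
    induction s using Multiset.induction with
    | empty => intro c; simpa using Splits.C _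
    | cons a s ih =>
      intro c
      have : C c * ((a ::ₘ s).map fun a => X - C a).prod
          = (C c * (s.map fun a => X - C a).prod) * (X - C a) := by
        rw [Multiset.map_cons, Multiset.prod_cons]; ring
      rw [this, reverse_mul_of_domain]
      refine Splits.mul (ih c) ?_
      refine Splits.of_natDegree_le_one ?_
      exact le_trans (reverse_natDegree_le _) (by simp)
  have := key p.roots p.leadingCoeff
  rwa [← hp.eq_prod_roots] at this

lemma quad_disc (q : ℝ[X]) (hq : q.Splits) (h2 : q.natDegree ≤ 2) :
    4 * (q.coeff 0 * q.coeff 2) ≤ q.coeff 1 ^ 2 := by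
  by_cases hc2 : q.coeff 2 = 0
  · rw [hc2]; nlinarith [sq_nonneg (q.coeff 1)]
  have hdeg : q.natDegree = 2 := le_antisymm h2 (le_natDegree_of_ne_zero hc2)
  have hq0 : q ≠ 0 := fun h => by simp [h] at hc2
  have hdeg' : q.degree ≠ 0 := by
    rw [degree_eq_natDegree hq0, hdeg]; exact (by norm_num)
  obtain ⟨z, hz⟩ := hq.exists_eval_eq_zero hdeg'
  have heval : q.eval z = 0 := by simpa using hz
  rw [eval_eq_sum_range, hdeg] at heval
  have : q.coeff 0 + q.coeff 1 * z + q.coeff 2 * z ^ 2 = 0 := by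
    rw [Finset.sum_range_succ, Finset.sum_range_succ, Finset.sum_range_one] at heval
    ring_nf at heval ⊢
    linarith [heval]
  have h4 : 4 * q.coeff 2 * (q.coeff 0 + q.coeff 1 * z + q.coeff 2 * z ^ 2) = 0 := by
    rw [this]; ring
  nlinarith [sq_nonneg (2 * q.coeff 2 * z + q.coeff 1), h4]

theorem esum_newton (x : Fin n → ℝ) (A : Finset (Fin n)) {m : ℕ} (h1 : 1 ≤ m)
    (h2 : m < A.card) :
    esum x (m-1) A * esum x (m+1) A ≤ esum x m A ^ 2 := by
  obtain ⟨m', rfl⟩ : ∃ m'', m = m'' + 1 := ⟨m - 1, by omega⟩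
  simp only [Nat.add_sub_cancel]
  set N := A.card with hN
  set D := N - m' - 2 with hD
  have hND : m' + 2 + D = N := by omega
  set f : ℝ[X] := ∏ i ∈ A, (X + C (x i)) with hf
  have hmonic : f.Monic := monic_prod_of_monic _ _ fun i _ => monic_X_add_C (x i)
  have hfdeg : f.natDegree = N := by
    rw [hf, natDegree_prod_of_monic _ _ fun i _ => monic_X_add_C (x i)]
    simp [natDegree_X_add_C, hN]
  have hsplit : f.Splits :=
    Splits.prod fun i _ => Splits.of_natDegree_le_one (by simp [natDegree_X_add_C])
  set g : ℝ[X] := derivative^[D] f with hg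
  have hgsplits : g.Splits := splits_iterate_derivative f hsplit D
  have hgcoeff : ∀ t, t ≤ m' + 2 →
      g.coeff t = ((t + D).descFactorial D : ℝ) * esum x (m' + 2 - t) A := by
    intro t ht
    rw [hg, coeff_iterate_derivative, nsmul_eq_mul]
    congr 1
    have h1 : t + D ≤ N := by omega
    rw [coeff_prodXC x A h1]
    congr 1
    omega
  have hgtop : g.coeff (m' + 2) ≠ 0 := by
    rw [hgcoeff (m' + 2) le_rfl]
    simp only [Nat.sub_self, esum_zero, mul_one]
    have : (m' + 2 + D).descFactorial D ≠ 0 := by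
      rw [Ne, Nat.descFactorial_eq_zero_iff_lt]; omega
    exact_mod_cast this
  have hgdeg : g.natDegree = m' + 2 := by
    refine le_antisymm ?_ (le_natDegree_of_ne_zero hgtop)
    calc g.natDegree ≤ f.natDegree - D := natDegree_iterate_derivative f D
    _ = m' + 2 := by omega
  set r : ℝ[X] := g.reverse with hr
  have hrsplits : r.Splits := splits_reverse g hgsplits
  have hrcoeff : ∀ t, t ≤ m' + 2 → r.coeff t = g.coeff (m' + 2 - t) := by
    intro t ht
    rw [hr, coeff_reverse, hgdeg, revAt_le ht]
  have hrdeg : r.natDegree ≤ m' + 2 := le_trans (reverse_natDegree_le g) (le_of_eq hgdeg)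
  set q : ℝ[X] := derivative^[m'] r with hq
  have hqsplits : q.Splits := splits_iterate_derivative r hrsplits m'
  have hqdeg : q.natDegree ≤ 2 :=
    le_trans (natDegree_iterate_derivative r m') (by omega)
  have hqcoeff : ∀ t, t ≤ 2 →
      q.coeff t = ((t + m').descFactorial m' : ℝ) * g.coeff (m' + 2 - (t + m')) := by
    intro t ht
    rw [hq, coeff_iterate_derivative, nsmul_eq_mul, hrcoeff (t + m') (by omega)]
  have hdisc := quad_disc q hqsplits hqdeg
  rw [hqcoeff 0 (by omega), hqcoeff 1 (by omega), hqcoeff 2 (by omega)] at hdisc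
  rw [hgcoeff _ (by omega : m' + 2 - (0 + m') ≤ m' + 2),
      hgcoeff _ (by omega : m' + 2 - (1 + m') ≤ m' + 2),
      hgcoeff _ (by omega : m' + 2 - (2 + m') ≤ m' + 2)] at hdisc
  have i0 : m' + 2 - (0 + m') = 2 := by omega
  have i1 : m' + 2 - (1 + m') = 1 := by omega
  have i2 : m' + 2 - (2 + m') = 0 := by omega
  rw [i0, i1, i2] at hdisc
  have j0 : m' + 2 - 2 = m' := by omega
  have j1 : m' + 2 - 1 = m' + 1 := by omega
  have j2 : m' + 2 - 0 = m' + 2 := by omega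
  rw [j0, j1, j2] at hdisc
  -- now hdisc : 4 * ((0+m').descF m' * (2+D).descF D * σ_{m'} ... ) ≤ ...
  set a := esum x m' A
  set b := esum x (m' + 1) A
  set c := esum x (m' + 2) A
  set K0 : ℕ := (0 + m').descFactorial m' * ((2 + D).descFactorial D) with hK0
  set K1 : ℕ := (1 + m').descFactorial m' * ((1 + D).descFactorial D) with hK1
  set K2 : ℕ := (2 + m').descFactorial m' * ((0 + D).descFactorial D) with hK2
  have hdisc' : 4 * ((K0 : ℝ) * (K2 : ℝ)) * (a * c) ≤ (K1 : ℝ)^2 * b^2 := by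
    push_cast [hK0, hK1, hK2]
    nlinarith [hdisc]
  have hKnat : K1 ^ 2 ≤ 4 * (K0 * K2) := by
    have e1 : (1 + m').descFactorial m' = (m' + 1) * m'.factorial := by
      have := Nat.factorial_mul_descFactorial (show m' ≤ m' + 1 by omega)
      rw [show m' + 1 - m' = 1 by omega] at this
      simp only [Nat.factorial_one, one_mul] at this
      rw [show 1 + m' = m' + 1 by omega, this, Nat.factorial_succ]
    have e0 : (0 + m').descFactorial m' = m'.factorial := by
      rw [zero_add, Nat.descFactorial_self]
    have e2 : 2 * (2 + m').descFactorial m' = (m' + 2) * ((m' + 1) * m'.factorial) := by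
      have := Nat.factorial_mul_descFactorial (show m' ≤ m' + 2 by omega)
      rw [show m' + 2 - m' = 2 by omega] at this
      have h2f : (2 : ℕ).factorial = 2 := rfl
      rw [h2f] at this
      rw [show 2 + m' = m' + 2 by omega, this, Nat.factorial_succ, Nat.factorial_succ]
    have e3 : (1 + D).descFactorial D = (D + 1) * D.factorial := by
      have := Nat.factorial_mul_descFactorial (show D ≤ D + 1 by omega)
      rw [show D + 1 - D = 1 by omega] at this
      simp only [Nat.factorial_one, one_mul] at this
      rw [show 1 + D = D + 1 by omega, this, Nat.factorial_succ]
    have e4 : 2 * (2 + D).descFactorial D = (D + 2) * ((D + 1) * D.factorial) := by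
      have := Nat.factorial_mul_descFactorial (show D ≤ D + 2 by omega)
      rw [show D + 2 - D = 2 by omega] at this
      have h2f : (2 : ℕ).factorial = 2 := rfl
      rw [h2f] at this
      rw [show 2 + D = D + 2 by omega, this, Nat.factorial_succ, Nat.factorial_succ]
    have e5 : (0 + D).descFactorial D = D.factorial := by
      rw [zero_add, Nat.descFactorial_self]
    have key : 4 * K1 ^ 2 ≤ 4 * (4 * (K0 * K2)) := by
      have expand : 4 * (4 * (K0 * K2)) =
          4 * ((0 + m').descFactorial m' * (2 * (2 + D).descFactorial D) *
            (2 * (2 + m').descFactorial m') * ((0 + D).descFactorial D)) := by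
        rw [hK0, hK2]; ring
      rw [expand, hK1, e1, e0, e2, e3, e4, e5]
      have lhs_eq : 4 * ((m' + 1) * m'.factorial * ((D + 1) * D.factorial)) ^ 2
          = ((m' + 1) * (D + 1)) * (((m' + 1) * (D + 1)) *
            (4 * (m'.factorial * m'.factorial * (D.factorial * D.factorial)))) := by ring
      have rhs_eq : 4 * (m'.factorial * ((D + 2) * ((D + 1) * D.factorial)) *
            ((m' + 2) * ((m' + 1) * m'.factorial)) * D.factorial)
          = ((m' + 1) * (D + 1)) * (((m' + 2) * (D + 2)) *
            (4 * (m'.factorial * m'.factorial * (D.factorial * D.factorial)))) := by ring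
      rw [lhs_eq, rhs_eq]
      refine Nat.mul_le_mul_left _ (Nat.mul_le_mul_right _ ?_)
      exact Nat.mul_le_mul (by omega) (by omega)
    omega
  rcases le_or_gt (a * c) 0 with hac | hac
  · nlinarith [sq_nonneg b]
  · have hKpos : 0 < (K1 : ℝ)^2 := by
      have : K1 ≠ 0 := by
        rw [hK1, Ne, Nat.mul_eq_zero]
        push_neg
        constructor <;> rw [Ne, Nat.descFactorial_eq_zero_iff_lt] <;> omega
      positivity
    have hcast : (K1 : ℝ)^2 ≤ 4 * ((K0:ℝ) * (K2:ℝ)) := by exact_mod_cast hKnat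
    nlinarith [hdisc', mul_le_mul_of_nonneg_right hcast (le_of_lt hac)]

theorem esum_S (x : Fin n → ℝ) {A : Finset (Fin n)} {a : Fin n} (ha : a ∈ A) {m : ℕ}
    (h1 : 1 ≤ m) (h2 : m + 1 < A.card) :
    esum x (m+1) A * esum x (m-1) (A.erase a) ≤ esum x m A * esum x m (A.erase a) := by
  obtain ⟨m', rfl⟩ : ∃ m'', m = m'' + 1 := ⟨m - 1, by omega⟩
  simp only [Nat.add_sub_cancel]
  have hcard : (A.erase a).card = A.card - 1 := Finset.card_erase_of_mem ha
  have hnewt : esum x m' (A.erase a) * esum x (m'+2) (A.erase a)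
      ≤ esum x (m'+1) (A.erase a) ^ 2 := by
    have := esum_newton x (A.erase a) (m := m'+1) (by omega) (by omega)
    simpa using this
  have e1 := esum_erase x ha (m'+1)
  have e2 := esum_erase x ha m'
  rw [e1, e2]
  nlinarith [hnewt]

theorem cone_erase (x : Fin n → ℝ) :
    ∀ (k : ℕ) (A : Finset (Fin n)) (a : Fin n), a ∈ A → k < A.card →
    (∀ r, 1 ≤ r → r ≤ k → 0 < esum x r A) →
    ∀ r, 1 ≤ r → r ≤ k - 1 → 0 < esum x r (A.erase a) := by
  intro k
  induction k with
  | zero => intro A a ha hk hcone r hr1 hr2; omega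
  | succ k ih =>
    intro A a ha hk hcone r hr1 hr2
    simp only [Nat.add_sub_cancel] at hr2
    have hk1 : 1 ≤ k := by omega
    rcases lt_or_eq_of_le hr2 with hrk | rfl
    · exact ih A a ha (by omega) (fun r h1 h2 => hcone r h1 (by omega)) r hr1 (by omega)
    have hcard : (A.erase a).card = A.card - 1 := Finset.card_erase_of_mem ha
    by_contra hcon
    push_neg at hcon
    have hp : 0 < esum x (r - 1) (A.erase a) := by
      rcases Nat.eq_or_lt_of_le hk1 with h | h
      · rw [← h]; simp [esum_zero]
      · exact ih A a ha (by omega) (fun r h1 h2 => hcone r h1 (by omega)) (r-1) (by omega) (by omega)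
    have hnewt : esum x (r-1) (A.erase a) * esum x (r+1) (A.erase a)
        ≤ esum x r (A.erase a) ^ 2 :=
      esum_newton x (A.erase a) hr1 (by omega)
    have hs1 : 0 < esum x r A := hcone r hr1 (by omega)
    have hs2 : 0 < esum x (r+1) A := hcone (r+1) (by omega) (by omega)
    have e1 : esum x r A = x a * esum x (r-1) (A.erase a) + esum x r (A.erase a) := by
      have := esum_erase x ha (r-1)
      rwa [show r - 1 + 1 = r by omega] at this
    have e2 : esum x (r+1) A
        = x a * esum x r (A.erase a) + esum x (r+1) (A.erase a) := esum_erase x ha r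
    rw [e1] at hs1
    rw [e2] at hs2
    set p := esum x (r-1) (A.erase a)
    set qq := esum x r (A.erase a)
    set w := esum x (r+1) (A.erase a)
    have prod1 : 0 ≤ (-qq) * (x a * p + qq) :=
      mul_nonneg (by linarith) (le_of_lt hs1)
    have prod2 : 0 < p * (x a * qq + w) := mul_pos hp hs2
    nlinarith [hnewt, prod1, prod2]

theorem esum_chain (x : Fin n → ℝ) {k c : ℕ} (hkn : k < n) (hlk : c + 2 ≤ k)
    (hcone : ∀ r, 1 ≤ r → r ≤ k → 0 < esum x r (univ : Finset (Fin n)))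
    {i j : Fin n} (hij : i ≠ j) :
    esum x k univ * esum x c ((univ.erase i).erase j) ≤
      esum x (c + 2) univ * esum x (k - 2) ((univ.erase i).erase j) := by
  classical
  set B := (univ : Finset (Fin n)).erase i with hB
  set U := B.erase j with hU
  have hcardA : (univ : Finset (Fin n)).card = n := by simp
  have hcardB : B.card = n - 1 := by rw [hB, Finset.card_erase_of_mem (mem_univ i), hcardA]
  have hjB : j ∈ B := Finset.mem_erase.2 ⟨Ne.symm hij, mem_univ j⟩
  have hcardU : U.card = n - 2 := by rw [hU, Finset.card_erase_of_mem hjB, hcardB]; omega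
  have hconeB : ∀ r, 1 ≤ r → r ≤ k - 1 → 0 < esum x r B :=
    cone_erase x k univ i (mem_univ i) (by omega) hcone
  have hconeU : ∀ r, 1 ≤ r → r ≤ k - 2 → 0 < esum x r U := by
    intro r h1 h2
    have := cone_erase x (k-1) B j hjB (by omega) (fun r h1 h2 => hconeB r h1 h2)
    exact this r h1 (by omega)
  have posA : ∀ r, r ≤ k → 0 < esum x r univ := by
    intro r hr
    rcases Nat.eq_zero_or_pos r with rfl | h
    · rw [esum_zero]; norm_num
    · exact hcone r h hr
  have posB : ∀ r, r ≤ k - 1 → 0 < esum x r B := by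
    intro r hr
    rcases Nat.eq_zero_or_pos r with rfl | h
    · rw [esum_zero]; norm_num
    · exact hconeB r h hr
  have posU : ∀ r, r ≤ k - 2 → 0 < esum x r U := by
    intro r hr
    rcases Nat.eq_zero_or_pos r with rfl | h
    · rw [esum_zero]; norm_num
    · exact hconeU r h hr
  -- the one-step inequality, for c ≤ m, m + 3 ≤ k + 1 i.e. m ≤ k - 1, stated additively
  have step : ∀ m, 2 ≤ m → m + 1 ≤ k →
      esum x (m+1) univ * esum x (m-2) U ≤ esum x m univ * esum x (m-1) U := by
    intro m hm2 hmk
    have s1 : esum x (m+1) univ * esum x (m-1) B ≤ esum x m univ * esum x m B := by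
      have := esum_S x (mem_univ i) (show 1 ≤ m by omega) (by rw [hcardA]; omega)
      exact this
    have s2 : esum x m B * esum x (m-2) U ≤ esum x (m-1) B * esum x (m-1) U := by
      have := esum_S x hjB (a := j) (A := B) (m := m - 1) (by omega) (by rw [hcardB]; omega)
      rw [show m - 1 + 1 = m by omega, show m - 1 - 1 = m - 2 by omega] at this
      exact this
    have hY : 0 < esum x m univ := posA m (by omega)
    have hA : 0 < esum x (m-1) B := posB (m-1) (by omega)
    have hD : 0 < esum x (m-2) U := posU (m-2) (by omega)
    have hE : 0 < esum x (m-1) U := posU (m-1) (by omega)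
    have h1 : esum x (m+1) univ * esum x (m-1) B * esum x (m-2) U
        ≤ esum x m univ * esum x m B * esum x (m-2) U :=
      mul_le_mul_of_nonneg_right s1 hD.le
    have h2 : esum x m univ * (esum x m B * esum x (m-2) U)
        ≤ esum x m univ * (esum x (m-1) B * esum x (m-1) U) :=
      mul_le_mul_of_nonneg_left s2 hY.le
    have h3 : (esum x (m+1) univ * esum x (m-2) U) * esum x (m-1) B
        ≤ (esum x m univ * esum x (m-1) U) * esum x (m-1) B := by nlinarith [h1, h2]
    exact le_of_mul_le_mul_right h3 hA
  -- chain
  have chain : ∀ d, c + 2 + d ≤ k →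
      esum x (c + 2 + d) univ * esum x c U ≤ esum x (c + 2) univ * esum x (c + d) U := by
    intro d
    induction d with
    | zero => intro _; simp
    | succ d ihd =>
      intro hd
      have ih' := ihd (by omega)
      have stp := step (c + 2 + d) (by omega) (by omega)
      rw [show c + 2 + d - 2 = c + d by omega, show c + 2 + d - 1 = c + d + 1 by omega] at stp
      have hv1 : 0 < esum x c U := posU c (by omega)
      have hv2 : 0 < esum x (c + d) U := posU (c + d) (by omega)
      have hv3 : 0 < esum x (c + d + 1) U := posU (c + d + 1) (by omega)
      have hl : 0 < esum x (c + 2) univ := posA (c + 2) (by omega)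
      have t1 : esum x (c + 2 + d + 1) univ * esum x (c + d) U * esum x c U
          ≤ esum x (c + 2 + d) univ * esum x (c + d + 1) U * esum x c U :=
        mul_le_mul_of_nonneg_right stp hv1.le
      have t2 : esum x (c + 2 + d) univ * esum x c U * esum x (c + d + 1) U
          ≤ esum x (c + 2) univ * esum x (c + d) U * esum x (c + d + 1) U :=
        mul_le_mul_of_nonneg_right ih' hv3.le
      have t3 : (esum x (c + 2 + (d+1)) univ * esum x c U) * esum x (c + d) U
          ≤ (esum x (c + 2) univ * esum x (c + (d+1)) U) * esum x (c + d) U := by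
        rw [show c + 2 + (d + 1) = c + 2 + d + 1 by omega, show c + (d+1) = c + d + 1 by omega]
        nlinarith [t1, t2]
      exact le_of_mul_le_mul_right t3 hv2
  have := chain (k - (c + 2)) (by omega)
  rwa [show c + 2 + (k - (c + 2)) = k by omega, show c + (k - (c + 2)) = k - 2 by omega] at this

noncomputable def Pco (x : Fin n → ℝ) (r : ℕ) (m : Fin n) : ℝ :=
  ∑ s ∈ (Finset.univ.powersetCard r).filter (fun s => m ∈ s), ∏ t ∈ s.erase m, x t

lemma Pco_zero (x : Fin n → ℝ) (m : Fin n) : Pco x 0 m = 0 := by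
  rw [Pco, Finset.powersetCard_zero]
  rw [Finset.filter_singleton]
  simp

lemma Pco_succ (x : Fin n → ℝ) (r : ℕ) (m : Fin n) :
    Pco x (r+1) m = esum x r (univ.erase m) := by
  classical
  rw [Pco, esum]
  refine Finset.sum_bij' (fun s _ => s.erase m) (fun t _ => insert m t) ?_ ?_ ?_ ?_ ?_
  · intro s hs
    rw [Finset.mem_filter, Finset.mem_powersetCard] at hs
    rw [Finset.mem_powersetCard]
    constructor
    · intro y hy
      rw [Finset.mem_erase] at hy ⊢
      exact ⟨hy.1, hs.1.1 hy.2⟩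
    · rw [Finset.card_erase_of_mem hs.2, hs.1.2]
      omega
  · intro t ht
    rw [Finset.mem_powersetCard] at ht
    have hmt : m ∉ t := fun hc => (Finset.mem_erase.1 (ht.1 hc)).1 rfl
    rw [Finset.mem_filter, Finset.mem_powersetCard]
    refine ⟨⟨fun y hy => mem_univ y, ?_⟩, Finset.mem_insert_self m t⟩
    rw [Finset.card_insert_of_notMem hmt, ht.2]
  · intro s hs
    rw [Finset.mem_filter] at hs
    exact Finset.insert_erase hs.2
  · intro t ht
    rw [Finset.mem_powersetCard] at ht
    have hmt : m ∉ t := fun hc => (Finset.mem_erase.1 (ht.1 hc)).1 rfl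
    exact Finset.erase_insert hmt
  · intro s hs; rfl

lemma Pco_diff (x : Fin n → ℝ) (r : ℕ) {i j : Fin n} (hij : i ≠ j) :
    Pco x (r+2) i - Pco x (r+2) j
      = (x j - x i) * esum x r ((univ.erase i).erase j) := by
  classical
  have hjB : j ∈ (univ : Finset (Fin n)).erase i := Finset.mem_erase.2 ⟨Ne.symm hij, mem_univ j⟩
  have hiB : i ∈ (univ : Finset (Fin n)).erase j := Finset.mem_erase.2 ⟨hij, mem_univ i⟩
  rw [Pco_succ, Pco_succ, esum_erase x hjB r, esum_erase x hiB r,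
    Finset.erase_right_comm (s := (univ : Finset (Fin n))) (a := j) (b := i)]
  ring

lemma esymmR_esum (r : ℕ) (y : Fin n → ℝ) : esymmR n r y = esum y r univ := rfl

set_option maxHeartbeats 2000000 in
/-- Monotonicity in i of the partial derivatives ∂[σ_k(η)/σ_l(η)]/∂λ_i for a
decreasingly ordered λ with η(λ) ∈ Γ_k. -/
theorem stmt3 (n k l : ℕ) (hn : 2 ≤ n) (γ : ℝ) (hγ : 1 ≤ γ) (hlk : l < k) (hkn : k < n)
    (lam : Fin n → ℝ) (hsort : ∀ i j : Fin n, i ≤ j → lam j ≤ lam i)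
    (hcone : etaV n γ lam ∈ GardingCone n k) :
    ∀ i j : Fin n, i ≤ j →
      fderiv ℝ (fun μ => esymmR n k (etaV n γ μ) / esymmR n l (etaV n γ μ)) lam
          (Pi.single i 1) ≤
      fderiv ℝ (fun μ => esymmR n k (etaV n γ μ) / esymmR n l (etaV n γ μ)) lam
          (Pi.single j 1) := by
  classical
  intro i j hij
  rcases eq_or_lt_of_le hij with rfl | hlt
  · exact le_refl _
  have hij' : i ≠ j := ne_of_lt hlt
  set η : Fin n → ℝ := etaV n γ lam with hη
  have hσ : ∀ r, 1 ≤ r → r ≤ k → 0 < esum η r univ := fun r h1 h2 => hcone r h1 h2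
  have hcardA : (univ : Finset (Fin n)).card = n := by simp
  -- linear maps
  set S : (Fin n → ℝ) →L[ℝ] ℝ := ∑ t : Fin n, ContinuousLinearMap.proj t with hS
  set L : Fin n → ((Fin n → ℝ) →L[ℝ] ℝ) :=
    fun m => γ • S - ContinuousLinearMap.proj m with hL
  have hLapp : ∀ (m : Fin n) (v : Fin n → ℝ), L m v = γ * (∑ t, v t) - v m := by
    intro m v
    simp [hL, hS, ContinuousLinearMap.sum_apply, smul_eq_mul]
  have hLder : ∀ m : Fin n, HasFDerivAt (fun μ : Fin n → ℝ => etaV n γ μ m) (L m) lam := by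
    intro m
    have he : (fun μ : Fin n → ℝ => etaV n γ μ m) = fun μ => L m μ := by
      funext μ; rw [hLapp]; rfl
    rw [he]
    exact (L m).hasFDerivAt
  set Dr : ℕ → ((Fin n → ℝ) →L[ℝ] ℝ) := fun r =>
    ∑ s ∈ Finset.univ.powersetCard r, ∑ m ∈ s, (∏ t ∈ s.erase m, η t) • L m with hDr
  have hDer : ∀ r : ℕ, HasFDerivAt (fun μ => esymmR n r (etaV n γ μ)) (Dr r) lam := by
    intro r
    have he : (fun μ => esymmR n r (etaV n γ μ))
        = fun μ => ∑ s ∈ Finset.univ.powersetCard r, ∏ t ∈ s, etaV n γ μ t := rfl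
    rw [he, hDr]
    exact HasFDerivAt.fun_sum fun s hs => HasFDerivAt.finset_prod fun m hm => hLder m
  have hDapp : ∀ (r : ℕ) (i0 : Fin n), Dr r (Pi.single i0 1)
      = γ * (∑ s ∈ Finset.univ.powersetCard r, ∑ m ∈ s, ∏ t ∈ s.erase m, η t)
        - Pco η r i0 := by
    intro r i0
    rw [hDr]
    simp only [ContinuousLinearMap.coe_sum', Finset.sum_apply, ContinuousLinearMap.coe_smul',
      Pi.smul_apply, smul_eq_mul]
    have hLs : ∀ m : Fin n, L m (Pi.single i0 1) = γ - (if m = i0 then 1 else 0) := by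
      intro m
      rw [hLapp, Fintype.sum_pi_single' i0 (1:ℝ), Pi.single_apply, mul_one]
    have step1 : ∀ s ∈ Finset.univ.powersetCard r,
        ∑ m ∈ s, (∏ t ∈ s.erase m, η t) * L m (Pi.single i0 1)
          = γ * (∑ m ∈ s, ∏ t ∈ s.erase m, η t)
            - (if i0 ∈ s then ∏ t ∈ s.erase i0, η t else 0) := by
      intro s hs
      have : ∀ m ∈ s, (∏ t ∈ s.erase m, η t) * L m (Pi.single i0 1)
          = γ * (∏ t ∈ s.erase m, η t)
            - (if m = i0 then (∏ t ∈ s.erase m, η t) else 0) := by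
        intro m hm
        rw [hLs m]
        by_cases h : m = i0 <;> simp [h] <;> ring
      rw [Finset.sum_congr rfl this, Finset.sum_sub_distrib, ← Finset.mul_sum,
        Finset.sum_ite_eq' s i0 (fun m => ∏ t ∈ s.erase m, η t)]
    rw [Finset.sum_congr rfl step1, Finset.sum_sub_distrib, ← Finset.mul_sum]
    congr 1
    rw [Pco, Finset.sum_filter]
  -- the quotient derivative
  set P : ℝ := esymmR n l (etaV n γ lam) with hP
  set Kk : ℝ := esymmR n k (etaV n γ lam) with hKk
  have hPpos : 0 < P := by
    rw [hP, esymmR_esum]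
    rcases Nat.eq_zero_or_pos l with rfl | hl
    · rw [esum_zero]; norm_num
    · exact hσ l hl (le_of_lt hlk)
  have hPne : P ≠ 0 := ne_of_gt hPpos
  have hinv : HasFDerivAt (fun μ => (esymmR n l (etaV n γ μ))⁻¹)
      ((-(P ^ 2)⁻¹) • Dr l) lam := by
    have h1 := (hasDerivAt_inv hPne).comp_hasFDerivAt lam (hDer l)
    exact h1
  have hmul : HasFDerivAt
      (fun μ => esymmR n k (etaV n γ μ) * (esymmR n l (etaV n γ μ))⁻¹)
      (Kk • ((-(P ^ 2)⁻¹) • Dr l) + P⁻¹ • Dr k) lam := (hDer k).mul hinv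
  have hfun : (fun μ => esymmR n k (etaV n γ μ) / esymmR n l (etaV n γ μ))
      = fun μ => esymmR n k (etaV n γ μ) * (esymmR n l (etaV n γ μ))⁻¹ := by
    funext μ; rw [div_eq_mul_inv]
  rw [hfun, hmul.fderiv]
  simp only [ContinuousLinearMap.add_apply, ContinuousLinearMap.coe_smul', Pi.smul_apply,
    smul_eq_mul]
  rw [hDapp k i, hDapp k j, hDapp l i, hDapp l j]
  set Tk : ℝ := ∑ s ∈ Finset.univ.powersetCard k, ∑ m ∈ s, ∏ t ∈ s.erase m, η t
  set Tl : ℝ := ∑ s ∈ Finset.univ.powersetCard l, ∑ m ∈ s, ∏ t ∈ s.erase m, η t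
  -- the master inequality
  have hηij : η i ≤ η j := by
    have h := hsort i j hij
    rw [hη]
    show γ * (∑ t, lam t) - lam i ≤ γ * (∑ t, lam t) - lam j
    linarith
  set U := ((univ : Finset (Fin n)).erase i).erase j with hU
  have hjB : j ∈ (univ : Finset (Fin n)).erase i := Finset.mem_erase.2 ⟨Ne.symm hij', mem_univ j⟩
  have hcardB : ((univ : Finset (Fin n)).erase i).card = n - 1 := by
    rw [Finset.card_erase_of_mem (mem_univ i), hcardA]
  have hUpos : ∀ r, r ≤ k - 2 → 0 ≤ esum η r U := by
    intro r hr
    rcases Nat.eq_zero_or_pos r with rfl | h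
    · rw [esum_zero]; norm_num
    · have hcB := cone_erase η k univ i (mem_univ i) (by omega) hσ
      have h2 := cone_erase η (k-1) ((univ : Finset (Fin n)).erase i) j hjB
        (by omega) hcB r h (by omega)
      exact le_of_lt h2
  have master : 0 ≤ P * (Pco η k i - Pco η k j) - Kk * (Pco η l i - Pco η l j) := by
    rw [hP, hKk, esymmR_esum, esymmR_esum]
    have hPco1 : ∀ m : Fin n, Pco η 1 m = 1 := by
      intro m
      rw [show (1:ℕ) = 0 + 1 from rfl, Pco_succ]
      exact esum_zero η _
    rcases Nat.lt_or_ge k 2 with hk2 | hk2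
    · have hk1 : k = 1 := by omega
      have hl0 : l = 0 := by omega
      subst hk1; subst hl0
      rw [Pco_zero, Pco_zero, hPco1 i, hPco1 j]
      simp
    · obtain ⟨k2, rfl⟩ : ∃ k2, k = k2 + 2 := ⟨k-2, by omega⟩
      have hPdiff : Pco η (k2+2) i - Pco η (k2+2) j = (η j - η i) * esum η k2 U :=
        Pco_diff η k2 hij'
      have hUk2 : 0 ≤ esum η k2 U := hUpos k2 (by omega)
      have hd : 0 ≤ η j - η i := by linarith
      have hσl : 0 < esum η l univ := by
        rcases Nat.eq_zero_or_pos l with rfl | hl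
        · rw [esum_zero]; norm_num
        · exact hσ l hl (by omega)
      rcases Nat.lt_or_ge l 2 with hl2 | hl2
      · have hQ0 : Pco η l i - Pco η l j = 0 := by
          rcases Nat.eq_zero_or_pos l with rfl | hl
          · rw [Pco_zero, Pco_zero]; ring
          · have hl1 : l = 1 := by omega
            subst hl1
            rw [hPco1 i, hPco1 j]; ring
        rw [hQ0, hPdiff, mul_zero, sub_zero]
        exact mul_nonneg (le_of_lt hσl) (mul_nonneg hd hUk2)
      · obtain ⟨l2, rfl⟩ : ∃ l2, l = l2 + 2 := ⟨l-2, by omega⟩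
        have hQdiff : Pco η (l2+2) i - Pco η (l2+2) j = (η j - η i) * esum η l2 U :=
          Pco_diff η l2 hij'
        rw [hPdiff, hQdiff]
        have hchain := esum_chain η (k := k2+2) (c := l2) hkn (by omega) hσ hij'
        rw [show k2+2-2 = k2 by omega] at hchain
        have hcomb : 0 ≤ esum η (l2+2) univ * esum η k2 U
            - esum η (k2+2) univ * esum η l2 U := by linarith
        calc (0:ℝ) ≤ (η j - η i) * (esum η (l2+2) univ * esum η k2 U
            - esum η (k2+2) univ * esum η l2 U) := mul_nonneg hd hcomb
          _ = esum η (l2+2) univ * ((η j - η i) * esum η k2 U)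
              - esum η (k2+2) univ * ((η j - η i) * esum η l2 U) := by ring
  have expand : (Kk * (-(P ^ 2)⁻¹ * (γ * Tl - Pco η l j)) + P⁻¹ * (γ * Tk - Pco η k j))
      - (Kk * (-(P ^ 2)⁻¹ * (γ * Tl - Pco η l i)) + P⁻¹ * (γ * Tk - Pco η k i))
      = (P * (Pco η k i - Pco η k j) - Kk * (Pco η l i - Pco η l j)) / P ^ 2 := by
    field_simp
    ring
  have hdivpos : 0 ≤ (P * (Pco η k i - Pco η k j) - Kk * (Pco η l i - Pco η l j)) / P ^ 2 :=
    div_nonneg master (le_of_lt (pow_pos hPpos 2))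
  linarith [expand, hdivpos]
end

section
/- Let n ≥ 2, γ ≥ 1, 0 ≤ l < k < n, λ ∈ ℝⁿ with η_i = γ·(∑_{j=1}^n λ_j) − λ_i and η ∈ Γ_k, and set f = σ_k(η)/σ_l(η). Then ∑_{j=1}^n ∂[σ_k(η)/σ_l(η)]/∂λ_j ≥ C(n,k,l)·f^{1 − 1/(k−l)} for a positive constant C(n,k,l) depending only on n, k, l. -/
open Finset

open Polynomial




lemma esymmR_eq (n j : ℕ) (η : Fin n → ℝ) :
    esymmR n j η = (Finset.univ.val.map η).esymm j :=
  (Finset.esymm_map_val η Finset.univ j).symm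
open Polynomial

lemma deriv_rr (p : ℝ[X]) (hp : p ≠ 0) (h : Multiset.card p.roots = p.natDegree)
    (hd : 1 ≤ p.natDegree) :
    derivative p ≠ 0 ∧ Multiset.card (derivative p).roots = (derivative p).natDegree ∧
      (derivative p).natDegree = p.natDegree - 1 := by
  have hne : derivative p ≠ 0 := by
    intro h0
    have hd1 : p.natDegree - 1 + 1 = p.natDegree := by omega
    have : (derivative p).coeff (p.natDegree - 1) = p.coeff (p.natDegree - 1 + 1) * ((p.natDegree - 1 : ℕ) + 1 : ℝ) := coeff_derivative p _
    rw [h0, coeff_zero, hd1] at this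
    have hl : p.coeff p.natDegree ≠ 0 := by
      rw [← leadingCoeff]; exact leadingCoeff_ne_zero.mpr hp
    have : p.coeff p.natDegree * (p.natDegree : ℝ) ≠ 0 :=
      mul_ne_zero hl (by exact_mod_cast (by omega : p.natDegree ≠ 0))
    simp_all
  have h1 := p.card_roots_le_derivative
  have h2 := natDegree_derivative_le p
  have h3 := (derivative p).card_roots'
  exact ⟨hne, by omega, by omega⟩

lemma iter_deriv_rr (p : ℝ[X]) (hp : p ≠ 0) (h : Multiset.card p.roots = p.natDegree)
    (j : ℕ) (hj : j ≤ p.natDegree) :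
    derivative^[j] p ≠ 0 ∧
      Multiset.card (derivative^[j] p).roots = (derivative^[j] p).natDegree ∧
      (derivative^[j] p).natDegree = p.natDegree - j := by
  induction j with
  | zero => exact ⟨hp, h, rfl⟩
  | succ j ih =>
    obtain ⟨h0, h1, h2⟩ := ih (by omega)
    have := deriv_rr _ h0 h1 (by omega)
    rw [Function.iterate_succ_apply']
    refine ⟨this.1, this.2.1, by omega⟩

lemma coeff_prod_C_mul_X_add_one (v : Multiset ℝ) (j : ℕ) :
    ((v.map (fun r => C r * X + 1)).prod).coeff j = v.esymm j := by
  induction v using Multiset.induction_on generalizing j with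
  | empty =>
    cases j with
    | zero => simp [Multiset.esymm]
    | succ j => simp [Multiset.esymm, coeff_one, Multiset.powersetCard_zero_right]
  | cons a v ih =>
    rw [Multiset.map_cons, Multiset.prod_cons]
    have hesymm : (a ::ₘ v).esymm (j) = v.esymm j + a * v.esymm (j-1) * (if j = 0 then 0 else 1) := by
      cases j with
      | zero => simp [Multiset.esymm]
      | succ j =>
        rw [Multiset.esymm, Multiset.powersetCard_cons, Multiset.map_add, Multiset.sum_add]
        simp only [Multiset.map_map, Function.comp_def, Multiset.prod_cons]
        rw [← Multiset.esymm, Multiset.sum_map_mul_left]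
        simp [Multiset.esymm]
    rw [hesymm]
    rw [add_mul, one_mul, coeff_add, mul_assoc, coeff_C_mul]
    cases j with
    | zero => simp [ih]
    | succ j => simp [coeff_X_mul, ih]; ring


noncomputable def Pm (v : Multiset ℝ) : ℝ[X] := (v.map (fun r => X + C r)).prod

lemma Pm_monic (v : Multiset ℝ) : (Pm v).Monic := by
  exact monic_multiset_prod_of_monic v _ (fun r _ => monic_X_add_C r)

lemma Pm_natDegree (v : Multiset ℝ) : (Pm v).natDegree = Multiset.card v := by
  rw [Pm, natDegree_multiset_prod_of_monic]
  · rw [Multiset.map_map]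
    simp [Function.comp_def, natDegree_X_add_C]
  · intro f hf
    obtain ⟨r, -, rfl⟩ := Multiset.mem_map.mp hf
    exact monic_X_add_C r

lemma Pm_roots (v : Multiset ℝ) : (Pm v).roots = v.map (fun r => -r) := by
  have h : Pm v = ((v.map (fun r => -r)).map (fun a => X - C a)).prod := by
    rw [Pm, Multiset.map_map]
    refine congrArg _ (Multiset.map_congr rfl fun r _ => ?_)
    simp [sub_neg_eq_add]
  rw [h, roots_multiset_prod_X_sub_C]

lemma Pm_coeff (v : Multiset ℝ) {j : ℕ} (hj : j ≤ Multiset.card v) :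
    (Pm v).coeff j = v.esymm (Multiset.card v - j) :=
  Multiset.prod_X_add_C_coeff v hj

lemma Pm_inv_coeff (v : Multiset ℝ) (hv : ∀ r ∈ v, r ≠ 0) (j : ℕ) :
    v.prod * (Pm (v.map (fun r => r⁻¹))).coeff j = v.esymm j := by
  have key : (v.map (fun r => C r * X + 1)).prod = C v.prod * Pm (v.map (fun r => r⁻¹)) := by
    have h1 : ∀ r ∈ v, C r * X + 1 = C r * (X + C r⁻¹) := by
      intro r hr
      rw [mul_add, ← C_mul, mul_inv_cancel₀ (hv r hr), C_1]
    rw [Multiset.map_congr rfl h1, Multiset.prod_map_mul, Pm, Multiset.map_map,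
      ← map_multiset_prod (C : ℝ →+* ℝ[X]) v]
    rfl
  have := coeff_prod_C_mul_X_add_one v j
  rw [key, coeff_C_mul] at this
  exact this

lemma newton (n m : ℕ) (hm : 1 ≤ m) (hmn : m < n) (η : Fin n → ℝ) :
    esymmR n (m-1) η * esymmR n (m+1) η *
      ((((m-1).factorial * (n-m+1).factorial * ((m+1).factorial * (n-m-1).factorial) : ℕ)) : ℝ) ≤
    esymmR n m η ^ 2 * (((m.factorial * (n-m).factorial : ℕ)) : ℝ) ^ 2 := by
  by_cases hz : esymmR n (m+1) η = 0
  · rw [hz, mul_zero, zero_mul]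
    positivity
  -- setup
  set s₀ : Multiset ℝ := Finset.univ.val.map η with hs₀
  have hcard : Multiset.card s₀ = n := by simp [hs₀]
  set p := Pm s₀ with hpdef
  have hpd : p.natDegree = n := by rw [hpdef, Pm_natDegree, hcard]
  have hpr : Multiset.card p.roots = p.natDegree := by
    rw [hpdef, Pm_roots, Multiset.card_map, hcard, Pm_natDegree, hcard]
  obtain ⟨hq0, hqrr, hqd⟩ := iter_deriv_rr p (Pm_monic s₀).ne_zero hpr (n-m-1) (by omega)
  set q := derivative^[n-m-1] p with hqdef
  have hqdeg : q.natDegree = m+1 := by rw [hqd, hpd]; omega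
  have hcq : ∀ i, i ≤ m+1 →
      q.coeff i = (((i + (n-m-1)).descFactorial (n-m-1) : ℕ) : ℝ) * esymmR n (m+1-i) η := by
    intro i hi
    rw [hqdef, coeff_iterate_derivative, nsmul_eq_mul]
    congr 1
    have h1 : p.coeff (i+(n-m-1)) = s₀.esymm (Multiset.card s₀ - (i+(n-m-1))) :=
      Pm_coeff s₀ (by omega)
    have h2 : Multiset.card s₀ - (i+(n-m-1)) = m+1-i := by omega
    rw [h1, h2, ← esymmR_eq]
  have hane : q.leadingCoeff ≠ 0 := leadingCoeff_ne_zero.mpr hq0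
  set a := q.leadingCoeff with hadef
  have hc0 : q.coeff 0 ≠ 0 := by
    rw [hcq 0 (by omega)]
    simp only [zero_add, Nat.descFactorial_self]
    exact mul_ne_zero (by exact_mod_cast (Nat.factorial_pos _).ne') (by simpa using hz)
  set t' : Multiset ℝ := q.roots.map (fun r => -r) with ht'def
  have hct' : Multiset.card t' = m+1 := by rw [ht'def, Multiset.card_map, hqrr, hqdeg]
  have ht'0 : ∀ r ∈ t', r ≠ 0 := by
    intro r hr h0
    obtain ⟨s, hs, hsr⟩ := Multiset.mem_map.mp hr
    have hs0 : s = 0 := by rw [h0] at hsr; linarith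
    rw [hs0] at hs
    exact hc0 (by rw [coeff_zero_eq_eval_zero]; exact (mem_roots'.mp hs).2)
  have hq' : q = C a * Pm t' := by
    conv_lhs => rw [← C_leadingCoeff_mul_prod_multiset_X_sub_C hqrr]
    congr 1
    rw [Pm, ht'def, Multiset.map_map]
    exact congrArg Multiset.prod
      (Multiset.map_congr rfl (fun r _ => by simp [Function.comp_def, sub_eq_add_neg]))
  have het' : ∀ i, i ≤ m+1 →
      a * t'.esymm i = (((n-i).descFactorial (n-m-1) : ℕ) : ℝ) * esymmR n i η := by
    intro i hi
    have h1 : q.coeff (m+1-i) = a * t'.esymm i := by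
      rw [hq', coeff_C_mul, Pm_coeff t' (by omega)]
      congr 2
      omega
    have h2 := hcq (m+1-i) (by omega)
    have h3 : (m+1-(m+1-i)) = i := by omega
    have h4 : (m+1-i) + (n-m-1) = n-i := by omega
    rw [h3, h4] at h2
    rw [← h1, h2]
  set u := t'.map (fun r => r⁻¹) with hudef
  have hcu : Multiset.card u = m+1 := by rw [hudef, Multiset.card_map, hct']
  set qh := Pm u with hqhdef
  have hqhd : qh.natDegree = m+1 := by rw [hqhdef, Pm_natDegree, hcu]
  have hqhr : Multiset.card qh.roots = qh.natDegree := by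
    rw [hqhdef, Pm_roots, Multiset.card_map, hqhd, hcu]
  obtain ⟨hr0, hrrr, hrd⟩ := iter_deriv_rr qh (Pm_monic u).ne_zero hqhr (m-1) (by omega)
  set rh := derivative^[m-1] qh with hrhdef
  have hrdeg : rh.natDegree = 2 := by rw [hrd, hqhd]; omega
  have hcr : ∀ i, rh.coeff i = (((i + (m-1)).descFactorial (m-1) : ℕ) : ℝ) * qh.coeff (i+(m-1)) := by
    intro i; rw [hrhdef, coeff_iterate_derivative, nsmul_eq_mul]
  have hcard_pos : 0 < Multiset.card rh.roots := by rw [hrrr, hrdeg]; omega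
  obtain ⟨x, hx⟩ := Multiset.card_pos_iff_exists_mem.mp hcard_pos
  have hev : rh.coeff 2 * (x*x) + rh.coeff 1 * x + rh.coeff 0 = 0 := by
    have h0 : rh.eval x = 0 := (mem_roots'.mp hx).2
    rw [eval_eq_sum_range, hrdeg] at h0
    rw [Finset.sum_range_succ, Finset.sum_range_succ, Finset.sum_range_one] at h0
    linear_combination h0
  have hd0 : 0 ≤ discrim (rh.coeff 2) (rh.coeff 1) (rh.coeff 0) := by
    rw [discrim_eq_sq_of_quadratic_eq_zero hev]; positivity
  rw [discrim] at hd0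
  have key1 : 4 * rh.coeff 2 * rh.coeff 0 ≤ rh.coeff 1 ^ 2 := by linarith
  -- abbreviations
  have hqi := Pm_inv_coeff t' ht'0
  set P := t'.prod with hPdef
  have i2 : (2 : ℕ) + (m-1) = m+1 := by omega
  have i1 : (1 : ℕ) + (m-1) = m := by omega
  have i0 : (0 : ℕ) + (m-1) = m-1 := by omega
  have hA2 : rh.coeff 2 = (((m+1).descFactorial (m-1) : ℕ) : ℝ) * qh.coeff (m+1) := by
    rw [hcr 2, i2]
  have hA1 : rh.coeff 1 = ((m.descFactorial (m-1) : ℕ) : ℝ) * qh.coeff m := by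
    rw [hcr 1, i1]
  have hA0 : rh.coeff 0 = (((m-1).descFactorial (m-1) : ℕ) : ℝ) * qh.coeff (m-1) := by
    rw [hcr 0, i0]
  set D2 : ℝ := (((m+1).descFactorial (m-1) : ℕ) : ℝ)
  set D1 : ℝ := ((m.descFactorial (m-1) : ℕ) : ℝ)
  set D0 : ℝ := (((m-1).descFactorial (m-1) : ℕ) : ℝ)
  set K2 : ℝ := (((n-(m+1)).descFactorial (n-m-1) : ℕ) : ℝ)
  set K1 : ℝ := (((n-m).descFactorial (n-m-1) : ℕ) : ℝ)
  set K0 : ℝ := (((n-(m-1)).descFactorial (n-m-1) : ℕ) : ℝ)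
  have e2 : a * (P * qh.coeff (m+1)) = K2 * esymmR n (m+1) η := by
    rw [hqi (m+1), het' (m+1) le_rfl]
  have e1 : a * (P * qh.coeff m) = K1 * esymmR n m η := by
    have hm' : m ≤ m + 1 := by omega
    rw [hqi m, het' m hm']
  have e0 : a * (P * qh.coeff (m-1)) = K0 * esymmR n (m-1) η := by
    rw [hqi (m-1), het' (m-1) (by omega)]
  have key2 : 4 * (D2 * qh.coeff (m+1)) * (D0 * qh.coeff (m-1)) ≤ (D1 * qh.coeff m)^2 := by
    rw [← hA2, ← hA0, ← hA1]
    exact key1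
  have hsq := mul_le_mul_of_nonneg_right key2 (sq_nonneg (a * P))
  have big : 4*D2*D0*(K2*esymmR n (m+1) η)*(K0*esymmR n (m-1) η)
      ≤ (D1*(K1*esymmR n m η))^2 := by
    calc 4*D2*D0*(K2*esymmR n (m+1) η)*(K0*esymmR n (m-1) η)
        = (4 * (D2 * qh.coeff (m+1)) * (D0 * qh.coeff (m-1))) * (a*P)^2 := by
          rw [← e2, ← e0]; ring
      _ ≤ (D1 * qh.coeff m)^2 * (a*P)^2 := hsq
      _ = (D1*(K1*esymmR n m η))^2 := by rw [← e1]; ring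
  -- constants
  have n2D2 : 2 * (m+1).descFactorial (m-1) = (m+1).factorial := by
    have h := Nat.factorial_mul_descFactorial (show m-1 ≤ m+1 by omega)
    have h2 : (m+1) - (m-1) = 2 := by omega
    rw [h2] at h
    simpa [Nat.factorial] using h
  have n2K0 : 2 * (n-(m-1)).descFactorial (n-m-1) = (n-m+1).factorial := by
    have h := Nat.factorial_mul_descFactorial (show n-m-1 ≤ n-(m-1) by omega)
    have h2 : (n-(m-1)) - (n-m-1) = 2 := by omega
    have h3 : (n-(m-1)).factorial = (n-m+1).factorial := by rw [show n-(m-1) = n-m+1 by omega]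
    rw [h2, h3] at h
    simpa [Nat.factorial] using h
  have nD0 : (m-1).descFactorial (m-1) = (m-1).factorial := Nat.descFactorial_self _
  have nK2 : (n-(m+1)).descFactorial (n-m-1) = (n-m-1).factorial := by
    have h : n-(m+1) = n-m-1 := by omega
    rw [h, Nat.descFactorial_self]
  have nD1 : m.descFactorial (m-1) = m.factorial := by
    have h := Nat.factorial_mul_descFactorial (show m-1 ≤ m by omega)
    have h2 : m - (m-1) = 1 := by omega
    rw [h2] at h
    simpa [Nat.factorial] using h
  have nK1 : (n-m).descFactorial (n-m-1) = (n-m).factorial := by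
    have h := Nat.factorial_mul_descFactorial (show n-m-1 ≤ n-m by omega)
    have h2 : (n-m) - (n-m-1) = 1 := by omega
    rw [h2] at h
    simpa [Nat.factorial] using h
  have E1 : ((((m-1).factorial * (n-m+1).factorial * ((m+1).factorial * (n-m-1).factorial) : ℕ)) : ℝ)
      = 4*D2*D0*K2*K0 := by
    rw [← n2D2, ← n2K0, ← nD0, ← nK2]
    push_cast
    ring
  have E3 : (((m.factorial * (n-m).factorial : ℕ)) : ℝ) = D1 * K1 := by
    rw [← nD1, ← nK1]
    push_cast
    ring
  calc esymmR n (m-1) η * esymmR n (m+1) η *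
      ((((m-1).factorial * (n-m+1).factorial * ((m+1).factorial * (n-m-1).factorial) : ℕ)) : ℝ)
      = 4*D2*D0*(K2*esymmR n (m+1) η)*(K0*esymmR n (m-1) η) := by rw [E1]; ring
    _ ≤ (D1*(K1*esymmR n m η))^2 := big
    _ = esymmR n m η ^ 2 * (((m.factorial * (n-m).factorial : ℕ)) : ℝ) ^ 2 := by rw [E3]; ring


lemma chainB_abs (k : ℕ) (p : ℕ → ℝ) (hp : ∀ j, j ≤ k → 0 < p j)
    (hN : ∀ m, 1 ≤ m → m + 1 ≤ k → p (m-1) * p (m+1) ≤ p m ^ 2) :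
    ∀ l', 1 ≤ l' → ∀ k', l' < k' → k' ≤ k → p k' * p (l'-1) ≤ p (k'-1) * p l' := by
  intro l' hl' k' hlk'
  induction k', hlk' using Nat.le_induction with
  | base =>
    intro hk
    have h := hN l' hl' (by omega)
    have h1 : l' + 1 - 1 = l' := by omega
    rw [h1]
    nlinarith [h]
  | succ k'' hk'' ih =>
    intro hk
    have hb := ih (by omega)
    have hnewt := hN k'' (by omega) (by omega)
    have hpk : 0 < p k'' := hp _ (by omega)
    have h1 : k'' + 1 - 1 = k'' := by omega
    rw [h1]
    have hcancel : p k'' * (p (k''+1) * p (l'-1)) ≤ p k'' * (p k'' * p l') := by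
      calc p k'' * (p (k''+1) * p (l'-1))
          = (p (k''-1) * p (k''+1)) * p (l'-1) * (p k'' / p (k''-1)) := by
            field_simp [(hp (k''-1) (by omega)).ne']
        _ ≤ (p k'' ^2) * p (l'-1) * (p k'' / p (k''-1)) := by
            have hd : 0 < p k'' / p (k''-1) := div_pos hpk (hp _ (by omega))
            have := mul_le_mul_of_nonneg_right hnewt (hp (l'-1) (by omega)).le
            exact mul_le_mul_of_nonneg_right this hd.le
        _ = (p k'' * p (l'-1)) * (p k'' * p k'' / p (k''-1)) := by ring
        _ ≤ (p (k''-1) * p l') * (p k'' * p k'' / p (k''-1)) := by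
            have hd : 0 ≤ p k'' * p k'' / p (k''-1) := div_nonneg (mul_nonneg hpk.le hpk.le) (hp _ (by omega)).le
            exact mul_le_mul_of_nonneg_right (ih (by omega)) hd
        _ = p k'' * (p k'' * p l') := by
            field_simp [(hp (k''-1) (by omega)).ne']
    exact le_of_mul_le_mul_left hcancel hpk

lemma chainC_abs (k l : ℕ) (p : ℕ → ℝ) (hl : l < k)
    (hp : ∀ j, j ≤ k → 0 < p j)
    (hN : ∀ m, 1 ≤ m → m + 1 ≤ k → p (m-1) * p (m+1) ≤ p m ^ 2) :
    p l * p k ^ (k-1-l) ≤ p (k-1) ^ (k-l) := by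
  have main : ∀ j, j ≤ k-1-l → p (k-1-j) * p k ^ j ≤ p (k-1) ^ (j+1) := by
    intro j
    induction j with
    | zero => intro _; simp
    | succ j ihj =>
      intro hj
      have hB := chainB_abs k p hp hN (k-1-j) (by omega) k (by omega) le_rfl
      have h1 : k-1-j-1 = k-1-(j+1) := by omega
      rw [h1] at hB
      calc p (k-1-(j+1)) * p k ^ (j+1)
          = (p k * p (k-1-(j+1))) * p k ^ j := by ring
        _ ≤ (p (k-1) * p (k-1-j)) * p k ^ j := by
            exact mul_le_mul_of_nonneg_right hB (pow_nonneg (hp k le_rfl).le j)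
        _ = p (k-1) * (p (k-1-j) * p k ^ j) := by ring
        _ ≤ p (k-1) * p (k-1) ^ (j+1) := by
            exact mul_le_mul_of_nonneg_left (ihj (by omega)) (hp (k-1) (by omega)).le
        _ = p (k-1) ^ (j+2) := by ring
  have := main (k-1-l) le_rfl
  have h1 : k-1-(k-1-l) = l := by omega
  have h2 : k-1-l+1 = k-l := by omega
  rw [h1, h2] at this
  exact this



noncomputable def esymmL (n m : ℕ) (η : Fin n → ℝ) : (Fin n → ℝ) →L[ℝ] ℝ :=
  ∑ s ∈ Finset.univ.powersetCard m, ∑ i ∈ s,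
    (∏ j ∈ s.erase i, η j) • (ContinuousLinearMap.proj i : (Fin n → ℝ) →L[ℝ] ℝ)

lemma hasFDerivAt_esymmR (n m : ℕ) (η : Fin n → ℝ) :
    HasFDerivAt (esymmR n m) (esymmL n m η) η := by
  have h : HasFDerivAt (fun x : Fin n → ℝ => ∑ s ∈ Finset.univ.powersetCard m, ∏ i ∈ s, x i)
      (esymmL n m η) η := by
    apply HasFDerivAt.fun_sum
    intro s _
    exact HasFDerivAt.finset_prod (fun i _ =>
      (ContinuousLinearMap.proj (R := ℝ) (φ := fun _ : Fin n => ℝ) i).hasFDerivAt)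
  exact h

lemma esymmL_ones (n m : ℕ) (η : Fin n → ℝ) (w : Fin n → ℝ) (c : ℝ) (hw : w = fun _ => c) :
    esymmL n m η w =
      c * ∑ s ∈ Finset.univ.powersetCard m, ∑ i ∈ s, ∏ j ∈ s.erase i, η j := by
  subst hw
  rw [esymmL]
  rw [ContinuousLinearMap.sum_apply, Finset.mul_sum]
  refine Finset.sum_congr rfl fun s _ => ?_
  rw [ContinuousLinearMap.sum_apply, Finset.mul_sum]
  refine Finset.sum_congr rfl fun i _ => ?_
  rw [ContinuousLinearMap.smul_apply, ContinuousLinearMap.proj_apply]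
  simp [mul_comm]

lemma trace_sum (n m : ℕ) (hm : 1 ≤ m) (hmn : m ≤ n) (η : Fin n → ℝ) :
    ∑ s ∈ (Finset.univ : Finset (Fin n)).powersetCard m, ∑ i ∈ s, ∏ j ∈ s.erase i, η j
      = ((n - m + 1 : ℕ) : ℝ) * esymmR n (m-1) η := by
  have key : ∑ s ∈ (Finset.univ : Finset (Fin n)).powersetCard m, ∑ i ∈ s, ∏ j ∈ s.erase i, η j
      = ∑ t ∈ (Finset.univ : Finset (Fin n)).powersetCard (m-1), ∑ i ∈ tᶜ, ∏ j ∈ t, η j := by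
    rw [Finset.sum_sigma', Finset.sum_sigma']
    refine Finset.sum_nbij' (fun p => ⟨p.1.erase p.2, p.2⟩) (fun p => ⟨insert p.2 p.1, p.2⟩)
      ?_ ?_ ?_ ?_ ?_
    · rintro ⟨s, i⟩ hp
      rw [Finset.mem_sigma] at hp
      obtain ⟨hs, hi⟩ := hp
      rw [Finset.mem_powersetCard] at hs
      rw [Finset.mem_sigma, Finset.mem_powersetCard]
      refine ⟨⟨Finset.subset_univ _, ?_⟩, ?_⟩
      · rw [Finset.card_erase_of_mem hi, hs.2]
      · rw [Finset.mem_compl]; exact Finset.notMem_erase _ _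
    · rintro ⟨t, i⟩ hp
      rw [Finset.mem_sigma] at hp
      obtain ⟨ht, hi⟩ := hp
      rw [Finset.mem_powersetCard] at ht
      rw [Finset.mem_compl] at hi
      rw [Finset.mem_sigma, Finset.mem_powersetCard]
      refine ⟨⟨Finset.subset_univ _, ?_⟩, Finset.mem_insert_self _ _⟩
      rw [Finset.card_insert_of_notMem hi, ht.2]
      omega
    · rintro ⟨s, i⟩ hp
      rw [Finset.mem_sigma] at hp
      simp [Finset.insert_erase hp.2]
    · rintro ⟨t, i⟩ hp
      rw [Finset.mem_sigma] at hp
      have hi : i ∉ t := Finset.mem_compl.mp hp.2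
      simp [Finset.erase_insert hi]
    · rintro ⟨s, i⟩ _
      rfl
  rw [key]
  have hcompl : ∀ t ∈ (Finset.univ : Finset (Fin n)).powersetCard (m-1),
      ∑ i ∈ tᶜ, ∏ j ∈ t, η j = ((n - m + 1 : ℕ) : ℝ) * ∏ j ∈ t, η j := by
    intro t ht
    rw [Finset.mem_powersetCard] at ht
    rw [Finset.sum_const, Finset.card_compl, ht.2]
    have : Fintype.card (Fin n) - (m-1) = n - m + 1 := by
      rw [Fintype.card_fin]
      omega
    rw [this, nsmul_eq_mul]
  rw [Finset.sum_congr rfl hcompl, ← Finset.mul_sum, esymmR]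


noncomputable def Amap (n : ℕ) (γ : ℝ) : (Fin n → ℝ) →L[ℝ] (Fin n → ℝ) :=
  ContinuousLinearMap.pi fun i =>
    γ • (∑ j : Fin n, ContinuousLinearMap.proj j) - ContinuousLinearMap.proj i

lemma Amap_apply (n : ℕ) (γ : ℝ) (lam : Fin n → ℝ) : Amap n γ lam = etaV n γ lam := by
  funext i
  simp [Amap, etaV, ContinuousLinearMap.sum_apply, smul_eq_mul]

lemma Amap_ones (n : ℕ) (γ : ℝ) :
    Amap n γ (fun _ => (1:ℝ)) = (γ * n - 1) • (fun _ => (1:ℝ)) := by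
  funext i
  simp [Amap, ContinuousLinearMap.sum_apply, smul_eq_mul, mul_comm]

lemma total_deriv (n k l : ℕ) (γ : ℝ) (lam : Fin n → ℝ)
    (hσl : esymmR n l (etaV n γ lam) ≠ 0) :
    ∑ j : Fin n, fderiv ℝ
        (fun μ => esymmR n k (etaV n γ μ) / esymmR n l (etaV n γ μ)) lam (Pi.single j 1)
      = (γ * n - 1) *
        ((esymmL n k (etaV n γ lam) (fun _ => 1) * esymmR n l (etaV n γ lam)
          - esymmR n k (etaV n γ lam) * esymmL n l (etaV n γ lam) (fun _ => 1))
            / (esymmR n l (etaV n γ lam))^2) := by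
  have hcomp : ∀ m : ℕ, HasFDerivAt (fun μ => esymmR n m (etaV n γ μ))
      ((esymmL n m (etaV n γ lam)).comp (Amap n γ)) lam := by
    intro m
    have h1 : HasFDerivAt (esymmR n m) (esymmL n m (etaV n γ lam)) (Amap n γ lam) := by
      rw [Amap_apply]; exact hasFDerivAt_esymmR n m _
    have h2 := h1.comp lam (Amap n γ).hasFDerivAt
    have hfe : (fun μ => esymmR n m (etaV n γ μ)) = esymmR n m ∘ ⇑(Amap n γ) := by
      funext μ; simp [Function.comp, Amap_apply]
    rw [hfe]
    exact h2
  have hinv : HasFDerivAt (fun μ => (esymmR n l (etaV n γ μ))⁻¹)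
      ((-((esymmR n l (etaV n γ lam))^2)⁻¹) •
        ((esymmL n l (etaV n γ lam)).comp (Amap n γ))) lam := by
    have hdi : HasDerivAt (fun y : ℝ => y⁻¹) (-(esymmR n l (etaV n γ lam) ^ 2)⁻¹)
        (esymmR n l (etaV n γ lam)) := hasDerivAt_inv hσl
    exact hdi.comp_hasFDerivAt lam (hcomp l)
  have hmul := (hcomp k).mul hinv
  have hdivfun : (fun μ => esymmR n k (etaV n γ μ) / esymmR n l (etaV n γ μ))
      = (fun μ => esymmR n k (etaV n γ μ) * (esymmR n l (etaV n γ μ))⁻¹) := by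
    funext μ; rw [div_eq_mul_inv]
  have hD : HasFDerivAt (fun μ => esymmR n k (etaV n γ μ) / esymmR n l (etaV n γ μ))
      (esymmR n k (etaV n γ lam) •
          ((-((esymmR n l (etaV n γ lam))^2)⁻¹) •
            ((esymmL n l (etaV n γ lam)).comp (Amap n γ)))
        + (esymmR n l (etaV n γ lam))⁻¹ • ((esymmL n k (etaV n γ lam)).comp (Amap n γ))) lam := by
    rw [hdivfun]
    exact hmul
  rw [hD.fderiv, ← map_sum]
  rw [show (∑ j : Fin n, Pi.single j (1:ℝ)) = (fun _ => 1) from Finset.univ_sum_single _]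
  rw [ContinuousLinearMap.add_apply, ContinuousLinearMap.smul_apply,
    ContinuousLinearMap.smul_apply, ContinuousLinearMap.smul_apply,
    ContinuousLinearMap.comp_apply, ContinuousLinearMap.comp_apply, Amap_ones,
    map_smul, map_smul]
  set Tk := esymmL n k (etaV n γ lam) (fun _ => 1)
  set Tl := esymmL n l (etaV n γ lam) (fun _ => 1)
  set a := esymmR n k (etaV n γ lam)
  set b := esymmR n l (etaV n γ lam)
  simp only [smul_eq_mul]
  field_simp
  ring


noncomputable def Wn (n j : ℕ) : ℝ := ((j.factorial * (n-j).factorial : ℕ) : ℝ)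

lemma Wn_pos (n j : ℕ) : 0 < Wn n j := by
  have := Nat.factorial_pos j
  have := Nat.factorial_pos (n-j)
  rw [Wn]
  positivity

lemma newton' (n m : ℕ) (hm : 1 ≤ m) (hmn : m < n) (η : Fin n → ℝ) :
    (esymmR n (m-1) η * Wn n (m-1)) * (esymmR n (m+1) η * Wn n (m+1))
      ≤ (esymmR n m η * Wn n m) ^ 2 := by
  have h := newton n m hm hmn η
  have hWe : Wn n (m-1) * Wn n (m+1)
      = ((((m-1).factorial * (n-m+1).factorial * ((m+1).factorial * (n-m-1).factorial) : ℕ)) : ℝ) := by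
    rw [Wn, Wn, show n-(m-1) = n-m+1 by omega, show n-(m+1) = n-m-1 by omega]
    push_cast
    ring
  calc (esymmR n (m-1) η * Wn n (m-1)) * (esymmR n (m+1) η * Wn n (m+1))
      = esymmR n (m-1) η * esymmR n (m+1) η * (Wn n (m-1) * Wn n (m+1)) := by ring
    _ ≤ esymmR n m η ^ 2 * (((m.factorial * (n-m).factorial : ℕ)) : ℝ) ^ 2 := by
        rw [hWe]; exact h
    _ = (esymmR n m η * Wn n m) ^ 2 := by rw [Wn]; ring

lemma esymmR_zero (n : ℕ) (η : Fin n → ℝ) : esymmR n 0 η = 1 := by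
  simp [esymmR]

lemma esymmL_zero (n : ℕ) (η : Fin n → ℝ) : esymmL n 0 η = 0 := by
  simp [esymmL]

lemma main_alg (n k l : ℕ) (hn : 2 ≤ n) (hlk : l < k) (hkn : k < n) (η : Fin n → ℝ)
    (hpos : ∀ j, j ≤ k → 0 < esymmR n j η) (γ : ℝ) (hγ : 1 ≤ γ) (Tl : ℝ)
    (hTlb : esymmR n k η * Tl * (k:ℝ)
      ≤ ((n-k+1:ℕ):ℝ) * (l:ℝ) * (esymmR n (k-1) η * esymmR n l η)) :
    (((n:ℝ)-1) * (((n-k+1:ℕ):ℝ) * ((k-l:ℕ):ℝ) / (k:ℝ)) *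
        (Wn n l / Wn n (k-1) * (Wn n k / Wn n l) ^ (1 - 1/((k:ℝ)-(l:ℝ))))) *
      (esymmR n k η / esymmR n l η) ^ (1 - 1/((k:ℝ)-(l:ℝ)))
    ≤ (γ*(n:ℝ)-1) * ((((n-k+1:ℕ):ℝ) * esymmR n (k-1) η * esymmR n l η - esymmR n k η * Tl)
        / (esymmR n l η)^2) := by
  set θ : ℝ := 1 - 1/((k:ℝ)-(l:ℝ)) with hθdef
  have hklR : (0:ℝ) < (k:ℝ) - (l:ℝ) := by
    have : (l:ℝ) < (k:ℝ) := by exact_mod_cast hlk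
    linarith
  have hkR : (0:ℝ) < (k:ℝ) := by
    have : 0 < k := by omega
    exact_mod_cast this
  set d := k - l with hddef
  set e := k - 1 - l with hedef
  have hdcast : ((d:ℕ):ℝ) = (k:ℝ) - (l:ℝ) := by
    rw [hddef, Nat.cast_sub hlk.le]
  have hecast : ((e:ℕ):ℝ) = (k:ℝ) - 1 - (l:ℝ) := by
    have h' : e + (l+1) = k := by omega
    have := congrArg (Nat.cast (R:=ℝ)) h'
    push_cast at this
    linarith
  have hθeq : θ = ((e:ℕ):ℝ)/((d:ℕ):ℝ) := by
    rw [hθdef, hdcast, hecast]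
    field_simp
    ring
  -- the normalized sequence
  set p : ℕ → ℝ := fun j => esymmR n j η * Wn n j with hpdef
  have hp : ∀ j, j ≤ k → 0 < p j := fun j hj => mul_pos (hpos j hj) (Wn_pos n j)
  have hN : ∀ m, 1 ≤ m → m + 1 ≤ k → p (m-1) * p (m+1) ≤ p m ^ 2 := by
    intro m hm hmk
    exact newton' n m hm (by omega) η
  have hσl := hpos l hlk.le
  have hσk := hpos k le_rfl
  have hσk1 := hpos (k-1) (by omega)
  -- numerator bound
  have hnum : (((n-k+1:ℕ):ℝ) * ((k-l:ℕ):ℝ) / (k:ℝ)) * (esymmR n (k-1) η * esymmR n l η)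
      ≤ ((n-k+1:ℕ):ℝ) * esymmR n (k-1) η * esymmR n l η - esymmR n k η * Tl := by
    rw [div_mul_eq_mul_div, div_le_iff₀ hkR, hdcast]
    nlinarith [hTlb]
  -- trace lower bound
  have htrace : (((n-k+1:ℕ):ℝ) * ((k-l:ℕ):ℝ) / (k:ℝ)) * (esymmR n (k-1) η / esymmR n l η)
      ≤ (((n-k+1:ℕ):ℝ) * esymmR n (k-1) η * esymmR n l η - esymmR n k η * Tl)
          / (esymmR n l η)^2 := by
    have h1 : (((n-k+1:ℕ):ℝ) * ((k-l:ℕ):ℝ) / (k:ℝ)) * (esymmR n (k-1) η / esymmR n l η)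
        = ((((n-k+1:ℕ):ℝ) * ((k-l:ℕ):ℝ) / (k:ℝ)) * (esymmR n (k-1) η * esymmR n l η))
            / (esymmR n l η)^2 := by
      field_simp
    rw [h1]
    exact (div_le_div_iff_of_pos_right (pow_pos hσl 2)).mpr hnum
  -- chainC and rpow
  have hC := chainC_abs k l p hlk hp hN
  set x : ℝ := p (k-1) / p l with hxdef
  set y : ℝ := p k / p l with hydef
  have hxpos : 0 < x := div_pos (hp _ (by omega)) (hp _ hlk.le)
  have hypos : 0 < y := div_pos (hp _ le_rfl) (hp _ hlk.le)
  have hyx : y ^ (e:ℕ) ≤ x ^ (d:ℕ) := by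
    rw [hxdef, hydef, div_pow, div_pow,
      div_le_div_iff₀ (pow_pos (hp l hlk.le) e) (pow_pos (hp l hlk.le) d)]
    calc p k ^ e * p l ^ d = (p l * p k ^ e) * p l ^ e := by
          rw [show d = e + 1 by omega]; ring
      _ ≤ p (k-1) ^ d * p l ^ e := by
          exact mul_le_mul_of_nonneg_right hC (pow_pos (hp l hlk.le) e).le
  have hd0 : ((d:ℕ):ℝ) ≠ 0 := by rw [hdcast]; exact hklR.ne'
  have hrp : y ^ θ ≤ x := by
    have h1 : y ^ ((e:ℕ):ℝ) ≤ x ^ ((d:ℕ):ℝ) := by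
      rw [Real.rpow_natCast, Real.rpow_natCast]; exact hyx
    have h2 := Real.rpow_le_rpow (Real.rpow_nonneg hypos.le _) h1
      (by positivity : (0:ℝ) ≤ 1/((d:ℕ):ℝ))
    rw [← Real.rpow_mul hypos.le, ← Real.rpow_mul hxpos.le, mul_one_div,
      mul_one_div, div_self hd0, Real.rpow_one, ← hθeq] at h2
    exact h2
  -- express ratios
  have hWl := Wn_pos n l
  have hWk := Wn_pos n k
  have hWk1 := Wn_pos n (k-1)
  have hxeq : Wn n l / Wn n (k-1) * x = esymmR n (k-1) η / esymmR n l η := by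
    rw [hxdef, hpdef]
    field_simp
  have hyeq : y = Wn n k / Wn n l * (esymmR n k η / esymmR n l η) := by
    rw [hydef, hpdef]
    field_simp
  have hfpos : 0 < esymmR n k η / esymmR n l η := div_pos hσk hσl
  have hmulr : y ^ θ = (Wn n k / Wn n l) ^ θ * (esymmR n k η / esymmR n l η) ^ θ := by
    rw [hyeq, Real.mul_rpow (by positivity) hfpos.le]
  -- combine
  have step1 : (Wn n l / Wn n (k-1) * (Wn n k / Wn n l) ^ θ) *
      (esymmR n k η / esymmR n l η) ^ θ ≤ esymmR n (k-1) η / esymmR n l η := by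
    calc (Wn n l / Wn n (k-1) * (Wn n k / Wn n l) ^ θ) *
        (esymmR n k η / esymmR n l η) ^ θ
        = (Wn n l / Wn n (k-1)) * (y ^ θ) := by rw [hmulr]; ring
      _ ≤ (Wn n l / Wn n (k-1)) * x := by
          exact mul_le_mul_of_nonneg_left hrp (by positivity)
      _ = esymmR n (k-1) η / esymmR n l η := hxeq
  set c1 : ℝ := ((n-k+1:ℕ):ℝ) * ((k-l:ℕ):ℝ) / (k:ℝ) with hc1def
  have hc1pos : 0 < c1 := by
    rw [hc1def]
    have h1 : 0 < n-k+1 := by omega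
    have h2 : 0 < k-l := by omega
    have h1' : (0:ℝ) < ((n-k+1:ℕ):ℝ) := by exact_mod_cast h1
    have h2' : (0:ℝ) < ((k-l:ℕ):ℝ) := by exact_mod_cast h2
    positivity
  have step2 : c1 * ((Wn n l / Wn n (k-1) * (Wn n k / Wn n l) ^ θ) *
      (esymmR n k η / esymmR n l η) ^ θ)
      ≤ (((n-k+1:ℕ):ℝ) * esymmR n (k-1) η * esymmR n l η - esymmR n k η * Tl)
          / (esymmR n l η)^2 := by
    calc c1 * ((Wn n l / Wn n (k-1) * (Wn n k / Wn n l) ^ θ) *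
        (esymmR n k η / esymmR n l η) ^ θ)
        ≤ c1 * (esymmR n (k-1) η / esymmR n l η) :=
          mul_le_mul_of_nonneg_left step1 hc1pos.le
      _ ≤ _ := htrace
  have hTrpos : 0 ≤ (((n-k+1:ℕ):ℝ) * esymmR n (k-1) η * esymmR n l η - esymmR n k η * Tl)
          / (esymmR n l η)^2 := by
    refine le_trans ?_ step2
    have h9 : (0:ℝ) ≤ (esymmR n k η / esymmR n l η) ^ θ := Real.rpow_nonneg hfpos.le θ
    have h8 : (0:ℝ) ≤ (Wn n k / Wn n l) ^ θ := Real.rpow_nonneg (by positivity) θ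
    have h7 : (0:ℝ) ≤ Wn n l / Wn n (k-1) := by positivity
    exact mul_nonneg hc1pos.le (mul_nonneg (mul_nonneg h7 h8) h9)
  have hγn : ((n:ℝ) - 1) ≤ γ*(n:ℝ)-1 := by
    have hn' : (0:ℝ) ≤ (n:ℝ) := by positivity
    have h := mul_le_mul_of_nonneg_right hγ hn'
    rw [one_mul] at h
    linarith
  have hn1 : (0:ℝ) < (n:ℝ)-1 := by
    have : (2:ℝ) ≤ (n:ℝ) := by exact_mod_cast hn
    linarith
  calc (((n:ℝ)-1) * c1 * (Wn n l / Wn n (k-1) * (Wn n k / Wn n l) ^ θ)) *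
      (esymmR n k η / esymmR n l η) ^ θ
      = ((n:ℝ)-1) * (c1 * ((Wn n l / Wn n (k-1) * (Wn n k / Wn n l) ^ θ) *
          (esymmR n k η / esymmR n l η) ^ θ)) := by ring
    _ ≤ ((n:ℝ)-1) * ((((n-k+1:ℕ):ℝ) * esymmR n (k-1) η * esymmR n l η - esymmR n k η * Tl)
          / (esymmR n l η)^2) := mul_le_mul_of_nonneg_left step2 hn1.le
    _ ≤ (γ*(n:ℝ)-1) * ((((n-k+1:ℕ):ℝ) * esymmR n (k-1) η * esymmR n l η - esymmR n k η * Tl)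
          / (esymmR n l η)^2) := mul_le_mul_of_nonneg_right hγn hTrpos

lemma Bbound (n k l : ℕ) (hl1 : 1 ≤ l) (hlk : l < k) (hkn : k < n) (η : Fin n → ℝ)
    (hpos : ∀ j, j ≤ k → 0 < esymmR n j η) :
    esymmR n k η * (((n-l+1:ℕ):ℝ) * esymmR n (l-1) η) * (k:ℝ)
      ≤ ((n-k+1:ℕ):ℝ) * (l:ℝ) * (esymmR n (k-1) η * esymmR n l η) := by
  have hB : esymmR n k η * Wn n k * (esymmR n (l-1) η * Wn n (l-1))
      ≤ esymmR n (k-1) η * Wn n (k-1) * (esymmR n l η * Wn n l) :=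
    chainB_abs k (fun j => esymmR n j η * Wn n j)
      (fun j hj => mul_pos (hpos j hj) (Wn_pos n j))
      (fun m hm hmk => newton' n m hm (by omega) η) l hl1 k hlk le_rfl
  have Ew : (n-l+1) * k * ((k-1).factorial * (n-(k-1)).factorial * (l.factorial * (n-l).factorial))
      = (n-k+1) * l * (k.factorial * (n-k).factorial * ((l-1).factorial * (n-(l-1)).factorial)) := by
    rw [show n-(k-1) = (n-k)+1 by omega, show n-(l-1) = (n-l)+1 by omega,
        Nat.factorial_succ, Nat.factorial_succ,
        ← Nat.mul_factorial_pred (show k ≠ 0 by omega),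
        ← Nat.mul_factorial_pred (show l ≠ 0 by omega)]
    ring
  have EwR : ((n-l+1:ℕ):ℝ) * (k:ℝ) * (Wn n (k-1) * Wn n l)
      = ((n-k+1:ℕ):ℝ) * (l:ℝ) * (Wn n k * Wn n (l-1)) := by
    have hc := congrArg (Nat.cast (R:=ℝ)) Ew
    push_cast at hc
    rw [Wn, Wn, Wn, Wn]
    push_cast
    linear_combination hc
  have hWpos : (0:ℝ) < Wn n k * Wn n (l-1) := mul_pos (Wn_pos n k) (Wn_pos n (l-1))
  have hcpos : (0:ℝ) ≤ ((n-l+1:ℕ):ℝ) * (k:ℝ) := by positivity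
  have hmul := mul_le_mul_of_nonneg_left hB hcpos
  refine le_of_mul_le_mul_right ?_ hWpos
  calc (esymmR n k η * (((n-l+1:ℕ):ℝ) * esymmR n (l-1) η) * (k:ℝ)) * (Wn n k * Wn n (l-1))
      = (((n-l+1:ℕ):ℝ) * (k:ℝ)) *
          (esymmR n k η * Wn n k * (esymmR n (l-1) η * Wn n (l-1))) := by ring
    _ ≤ (((n-l+1:ℕ):ℝ) * (k:ℝ)) *
          (esymmR n (k-1) η * Wn n (k-1) * (esymmR n l η * Wn n l)) := hmul
    _ = (((n-l+1:ℕ):ℝ) * (k:ℝ) * (Wn n (k-1) * Wn n l)) *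
          (esymmR n (k-1) η * esymmR n l η) := by ring
    _ = (((n-k+1:ℕ):ℝ) * (l:ℝ) * (Wn n k * Wn n (l-1))) *
          (esymmR n (k-1) η * esymmR n l η) := by rw [EwR]
    _ = (((n-k+1:ℕ):ℝ) * (l:ℝ) * (esymmR n (k-1) η * esymmR n l η)) *
          (Wn n k * Wn n (l-1)) := by ring


/-- The trace of the linearized operator of σ_k(η)/σ_l(η) is bounded below by
C(n,k,l)·f^{1 − 1/(k−l)} where f = σ_k(η)/σ_l(η). -/
theorem stmt5 (n k l : ℕ) (hn : 2 ≤ n) (hlk : l < k) (hkn : k < n) :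
    ∃ C : ℝ, 0 < C ∧ ∀ γ : ℝ, 1 ≤ γ → ∀ lam : Fin n → ℝ,
      etaV n γ lam ∈ GardingCone n k →
      C * (esymmR n k (etaV n γ lam) / esymmR n l (etaV n γ lam))
            ^ (1 - (1 : ℝ) / ((k : ℝ) - (l : ℝ))) ≤
        ∑ j : Fin n, fderiv ℝ
          (fun μ => esymmR n k (etaV n γ μ) / esymmR n l (etaV n γ μ)) lam
          (Pi.single j 1) := by
  have hk1 : 1 ≤ k := by omega
  refine ⟨((n:ℝ)-1) * (((n-k+1:ℕ):ℝ) * ((k-l:ℕ):ℝ) / (k:ℝ)) *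
      (Wn n l / Wn n (k-1) * (Wn n k / Wn n l) ^ (1 - 1/((k:ℝ)-(l:ℝ)))), ?_, ?_⟩
  · have h1 : (0:ℝ) < (n:ℝ)-1 := by
      have : (2:ℝ) ≤ (n:ℝ) := by exact_mod_cast hn
      linarith
    have h2 : (0:ℝ) < ((n-k+1:ℕ):ℝ) := by exact_mod_cast (show 0 < n-k+1 by omega)
    have h3 : (0:ℝ) < ((k-l:ℕ):ℝ) := by exact_mod_cast (show 0 < k-l by omega)
    have h4 : (0:ℝ) < (k:ℝ) := by exact_mod_cast (show 0 < k by omega)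
    have h5 := Wn_pos n l
    have h6 := Wn_pos n (k-1)
    have h7 := Wn_pos n k
    have h8 : (0:ℝ) < (Wn n k / Wn n l) ^ (1 - 1/((k:ℝ)-(l:ℝ))) :=
      Real.rpow_pos_of_pos (by positivity) _
    positivity
  · intro γ hγ lam hGC
    have hpos : ∀ j, j ≤ k → 0 < esymmR n j (etaV n γ lam) := by
      intro j hj
      rcases Nat.eq_zero_or_pos j with h0 | h1
      · rw [h0, esymmR_zero]; norm_num
      · exact hGC j h1 hj
    have hσl := hpos l (by omega)
    rw [total_deriv n k l γ lam hσl.ne']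
    rw [esymmL_ones n k (etaV n γ lam) (fun _ => 1) 1 rfl,
        trace_sum n k hk1 (by omega) (etaV n γ lam), one_mul]
    by_cases hl0 : l = 0
    · subst hl0
      rw [esymmL_zero, ContinuousLinearMap.zero_apply]
      exact main_alg n k 0 hn hlk hkn _ hpos γ hγ 0 (by simp)
    · have hl1 : 1 ≤ l := by omega
      rw [esymmL_ones n l (etaV n γ lam) (fun _ => 1) 1 rfl,
          trace_sum n l hl1 (by omega) (etaV n γ lam), one_mul]
      exact main_alg n k l hn hlk hkn _ hpos γ hγ
        (((n-l+1:ℕ):ℝ) * esymmR n (l-1) (etaV n γ lam))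
        (Bbound n k l hl1 hlk hkn _ hpos)
end
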